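/- Let 1 ≤ n₁ ≤ ⋯ ≤ n_k be unbalanced, i.e. n_k − 1 ≥ Π_{i=1}^{k-1}(n_i + 1) − Σ_{i=1}^{k-1} n_i. Then the typical tensor rank satisfies R(n₁,…,n_k) = min{ n_k + 1, Π_{i=1}^{k-1}(n_i + 1) }; that is, the least s for which there exist s points p₁,…,p_s with Σ_{j=1}^s T_{p_j} = V₁ ⊗ ⋯ ⊗ V_k equals min{ n_k + 1, Π_{i=1}^{k-1}(n_i + 1) }. -/

import Mathlib

open scoped TensorProduct

/-- The subspace `G^i_p = v₁ ⊗ ⋯ ⊗ v_{i-1} ⊗ Vᵢ ⊗ v_{i+1} ⊗ ⋯ ⊗ v_k` of the tensor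
space `⨂ᵢ K^{nᵢ+1}` attached to the point `p = v₁ ⊗ ⋯ ⊗ v_k`. -/
noncomputable def segreG (K : Type*) [Field K] {k : ℕ} (n : Fin k → ℕ)
    (v : ∀ i, Fin (n i + 1) → K) (i : Fin k) :
    Submodule K (⨂[K] i, (Fin (n i + 1) → K)) :=
  LinearMap.range ((PiTensorProduct.tprod K).toLinearMap v i)

/-- The affine tangent space `T_p = Σᵢ v₁ ⊗ ⋯ ⊗ Vᵢ ⊗ ⋯ ⊗ v_k` to the Segre variety at
`p = v₁ ⊗ ⋯ ⊗ v_k`. -/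
noncomputable def segreTangent (K : Type*) [Field K] {k : ℕ} (n : Fin k → ℕ)
    (v : ∀ i, Fin (n i + 1) → K) : Submodule K (⨂[K] i, (Fin (n i + 1) → K)) :=
  ⨆ i, segreG K n v i

/-- The statement `T(n₁,…,n_k; s; a₁,…,a_k)` of Abo–Ottaviani–Peterson holds:
there are points `p₁,…,p_s` and `q_{i,1},…,q_{i,aᵢ}` (pure tensors of nonzero vectors)
such that the span of the tangent spaces `T_{p_j}` together with the subspaces
`G^i_{q_{i,l}}` has the expected (maximal possible) dimension
`min (s(1 + Σ nᵢ) + Σ aᵢ(nᵢ+1)) (Π (nᵢ+1))`. -/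
def THolds (K : Type*) [Field K] {k : ℕ} (n : Fin k → ℕ) (s : ℕ) (a : Fin k → ℕ) : Prop :=
  ∃ (p : Fin s → ∀ i, Fin (n i + 1) → K)
    (q : ∀ i : Fin k, Fin (a i) → ∀ j, Fin (n j + 1) → K),
    (∀ j i, p j i ≠ 0) ∧ (∀ i l j, q i l j ≠ 0) ∧
    Module.finrank K
      (((⨆ j, segreTangent K n (p j)) ⊔ (⨆ i, ⨆ l, segreG K n (q i l) i))
        : Submodule K (⨂[K] i, (Fin (n i + 1) → K)))
      = min (s * (1 + ∑ i, n i) + ∑ i, a i * (n i + 1)) (∏ i, (n i + 1))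

/-- The statement `T(n₁,…,n_k; s; a₁,…,a_k)` fails: every choice of points gives a span
of dimension strictly smaller than the expected dimension. -/
def TFails (K : Type*) [Field K] {k : ℕ} (n : Fin k → ℕ) (s : ℕ) (a : Fin k → ℕ) : Prop :=
  ∀ (p : Fin s → ∀ i, Fin (n i + 1) → K)
    (q : ∀ i : Fin k, Fin (a i) → ∀ j, Fin (n j + 1) → K),
    (∀ j i, p j i ≠ 0) → (∀ i l j, q i l j ≠ 0) →
    Module.finrank K
      (((⨆ j, segreTangent K n (p j)) ⊔ (⨆ i, ⨆ l, segreG K n (q i l) i))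
        : Submodule K (⨂[K] i, (Fin (n i + 1) → K)))
      < min (s * (1 + ∑ i, n i) + ∑ i, a i * (n i + 1)) (∏ i, (n i + 1))

/-- The tuple `(n; s; a)` is subabundant. -/
def Subabundant {k : ℕ} (n : Fin k → ℕ) (s : ℕ) (a : Fin k → ℕ) : Prop :=
  s * (1 + ∑ i, n i) + ∑ i, a i * (n i + 1) ≤ ∏ i, (n i + 1)

/-- The tuple `(n; s; a)` is superabundant. -/
def Superabundant {k : ℕ} (n : Fin k → ℕ) (s : ℕ) (a : Fin k → ℕ) : Prop :=
  ∏ i, (n i + 1) ≤ s * (1 + ∑ i, n i) + ∑ i, a i * (n i + 1)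

/-!
Split the tensor space as `K^{n_L+1} ⊗ W`, where `L` is the last factor and `W` is the tensor
product of the others, of dimension `P = Π_{i ≠ L} (nᵢ + 1)`.

If `s < min (n_L + 1) P`, some nonzero `φ` kills the `L`-th factors of `s` given points and some
nonzero `ψ` kills their `W`-parts, so `φ ⊗ ψ` vanishes on all their tangent spaces.

Conversely, the tangent spaces fill the whole space as soon as, for every basis vector `e_a` of the
`L`-th factor, the `w ∈ W` with `e_a ⊗ w` a pure tensor of their sum span `W` (the `a`-th slice).
For `P` points this holds when their `W`-parts run through the basis of `W`. For `n_L + 1` points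
with `L`-th factors `e_0, …, e_{n_L}`, the `a`-th slice contains the `W`-parts of all points and
the tangent space at the `a`-th one to the Segre variety of `W`. If `P ≤ n_L + 1 + Σ_{i ≠ L} nᵢ`,
basis points show that these can span: the tangent space at `e_0 ⊗ ⋯ ⊗ e_0` contains the
`1 + Σ nᵢ` basis tensors with at most one nonzero index, and the other `n_L` points supply the
rest. Spanning is a Zariski-open condition, so over an infinite field generic points work for all
`a` at once.
-/

open PiTensorProduct Function

section LinearAlgebra

variable {K : Type*} [Field K]

theorem exists_linearIndependent_comp_of_span_eq_top {V κ ι : Type*} [AddCommGroup V]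
    [Module K V] [FiniteDimensional K V] [Fintype ι] (v : κ → V)
    (hv : Submodule.span K (Set.range v) = ⊤) (hι : Fintype.card ι = Module.finrank K V) :
    ∃ g : ι → κ, LinearIndependent K (v ∘ g) := by
  obtain ⟨κ', a, -, hspan, hli⟩ := exists_linearIndependent' K v
  let b : Module.Basis κ' K V := .mk hli (by rw [hspan, hv])
  have : Finite κ' := Module.Finite.finite_basis b
  obtain ⟨e⟩ : Nonempty (ι ≃ κ') := Finite.card_eq.1 <| by
    rw [← Module.finrank_eq_nat_card_basis b, Nat.card_eq_fintype_card, hι]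
  exact ⟨a ∘ e, hli.comp e e.injective⟩

theorem exists_ne_zero_forall_dotProduct_eq_zero {ι J : Type*} [Fintype ι] [Fintype J]
    (v : J → ι → K) (hJ : Fintype.card J < Fintype.card ι) :
    ∃ φ ≠ 0, ∀ l, φ ⬝ᵥ v l = 0 := by
  obtain ⟨φ, hφ, hφ0⟩ := Submodule.exists_mem_ne_zero_of_ne_bot <|
    LinearMap.ker_ne_bot_of_finrank_lt (f := (Matrix.of v).mulVecLin) (by simpa using hJ)
  exact ⟨φ, hφ0, fun l => by rw [dotProduct_comm]; exact congrFun (LinearMap.mem_ker.1 hφ) l⟩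

theorem linearIndependent_iff_det_ne_zero {ι : Type*} [Fintype ι] [DecidableEq ι]
    (w : ι → ι → K) : LinearIndependent K w ↔ (Matrix.of w).det ≠ 0 := by
  rw [← isUnit_iff_ne_zero, ← Matrix.isUnit_iff_isUnit_det,
    ← Matrix.linearIndependent_rows_iff_isUnit]
  rfl

/-- Spanning is a nonempty Zariski-open condition on the parameters, cut out by a maximal minor. -/
theorem exists_ne_zero_forall_eval_ne_zero_span_eq_top {σ κ ι : Type*} [Fintype ι]
    [DecidableEq ι] (F : κ → ι → MvPolynomial σ K) (v₀ : σ → K)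
    (h₀ : Submodule.span K (Set.range fun x => MvPolynomial.eval v₀ ∘ F x) = ⊤) :
    ∃ D ≠ 0, ∀ v, MvPolynomial.eval v D ≠ 0 →
      Submodule.span K (Set.range fun x => MvPolynomial.eval v ∘ F x) = ⊤ := by
  obtain ⟨g, hg⟩ := exists_linearIndependent_comp_of_span_eq_top _ h₀
    (Module.finrank_fintype_fun_eq_card K).symm
  have eval_det (v : σ → K) : MvPolynomial.eval v (Matrix.of (F ∘ g)).det
      = (Matrix.of ((fun x => MvPolynomial.eval v ∘ F x) ∘ g)).det :=
    RingHom.map_det _ _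
  refine ⟨(Matrix.of (F ∘ g)).det, fun hD => ?_, fun v hv => ?_⟩
  · refine (linearIndependent_iff_det_ne_zero _).1 hg ?_
    rw [← eval_det, hD, map_zero]
  · rw [eval_det, ← linearIndependent_iff_det_ne_zero] at hv
    rw [eq_top_iff,
      ← hv.span_eq_top_of_card_eq_finrank' (Module.finrank_fintype_fun_eq_card K).symm]
    exact Submodule.span_mono (Set.range_comp_subset_range g _)

theorem exists_forall_eval_ne_zero {R σ τ : Type*} [CommRing R] [IsDomain R] [Infinite R]
    [Fintype τ] (f : τ → MvPolynomial σ R) (hf : ∀ t, f t ≠ 0) :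
    ∃ v : σ → R, ∀ t, MvPolynomial.eval v (f t) ≠ 0 := by
  have hprod : ∏ t, f t ≠ 0 := Finset.prod_ne_zero_iff.2 fun t _ => hf t
  by_contra! h
  refine hprod (MvPolynomial.funext fun v => ?_)
  obtain ⟨t, ht⟩ := h v
  rw [map_prod, map_zero]
  exact Finset.prod_eq_zero (Finset.mem_univ t) ht

end LinearAlgebra

section TensorCoords

variable {ι R : Type*} [Fintype ι] [CommRing R]

/-- The coordinates of the pure tensor `⊗ᵢ xᵢ`. -/
def tensorCoords {β : ι → Type*} (x : ∀ i, β i → R) (c : ∀ i, β i) : R :=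
  ∏ i, x i (c i)

theorem tensorCoords_single {β : ι → Type*} [∀ i, DecidableEq (β i)] (c : ∀ i, β i) :
    tensorCoords (β := β) (fun i => Pi.single (c i) (1 : R)) = Pi.single c 1 := by
  funext c'
  simp [tensorCoords, Pi.single_apply, Finset.prod_boole, funext_iff]

theorem map_tensorCoords {S : Type*} [CommRing S] {β : ι → Type*} (f : R →+* S)
    (x : ∀ i, β i → R) (c : ∀ i, β i) :
    f (tensorCoords x c) = tensorCoords (fun i r => f (x i r)) c :=
  map_prod f _ _

variable [DecidableEq ι] {m : ι → ℕ}

/-- The coordinate vectors of the points `⊗ y l` together with the spanning vectors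
`y a ⊗ ⋯ ⊗ eᵣ ⊗ ⋯ ⊗ y a` of the tangent space to the Segre variety at `⊗ y a`. -/
def pointsWithTangentAt {J : Type*} (y : J → ∀ i, Fin (m i + 1) → R) (a : J) :
    J ⊕ (Σ i, Fin (m i + 1)) → (∀ i, Fin (m i + 1)) → R
  | .inl l => tensorCoords (y l)
  | .inr z => tensorCoords (update (y a) z.1 (Pi.single z.2 1))

theorem map_comp_pointsWithTangentAt {S J : Type*} [CommRing S] (f : R →+* S)
    (y : J → ∀ i, Fin (m i + 1) → R) (a : J) (x : J ⊕ (Σ i, Fin (m i + 1))) :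
    f ∘ pointsWithTangentAt y a x = pointsWithTangentAt (fun l i r => f (y l i r)) a x := by
  funext c
  rcases x with l | ⟨j, r⟩
  · exact map_tensorCoords f _ c
  · simp only [comp_apply, pointsWithTangentAt, map_tensorCoords]
    congr 1
    funext i r'
    rcases eq_or_ne i j with rfl | hij
    · simp [Pi.single_apply, apply_ite f]
    · simp [update_of_ne hij]

theorem one_add_sum_le_card_insert_zero_image_update :
    1 + ∑ i, m i ≤ (insert 0 (Finset.univ.image fun z : Σ i, Fin (m i + 1) =>
      update (0 : ∀ i, Fin (m i + 1)) z.1 z.2)).card := by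
  calc 1 + ∑ i, m i = (Finset.univ : Finset (Option (Σ i, Fin (m i)))).card := by
        simp [Fintype.card_sigma, add_comm]
    _ ≤ _ := Finset.card_le_card_of_injOn
        (fun o => o.elim 0 fun z => update (0 : ∀ i, Fin (m i + 1)) z.1 z.2.succ) ?_ ?_
  · rintro (_ | ⟨i, r⟩) -
    · simp
    · exact Finset.mem_insert_of_mem (Finset.mem_image.2 ⟨⟨i, r.succ⟩, Finset.mem_univ _, rfl⟩)
  · rintro (_ | ⟨i, r⟩) - (_ | ⟨j, t⟩) - h
    · rfl
    · simpa using (congrFun h j).symm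
    · simpa using congrFun h i
    · rcases eq_or_ne i j with rfl | hij
      · simpa using congrFun h i
      · simpa [update_of_ne hij] using congrFun h i

theorem exists_forall_eq_or_update_eq_of_card_le {N : ℕ} (a : Fin (N + 1))
    (h : ∏ i, (m i + 1) ≤ N + 1 + ∑ i, m i) :
    ∃ w : Fin (N + 1) → ∀ i, Fin (m i + 1),
      ∀ c, (∃ l, w l = c) ∨ ∃ i r, update (w a) i r = c := by
  set B := insert 0 (Finset.univ.image fun z : Σ i, Fin (m i + 1) =>
    update (0 : ∀ i, Fin (m i + 1)) z.1 z.2)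
  have hB : 1 + ∑ i, m i ≤ B.card := one_add_sum_le_card_insert_zero_image_update
  have hBc : Fintype.card (↥Bᶜ) ≤ Fintype.card (Fin N) := by
    rw [Fintype.card_coe, Finset.card_compl, Fintype.card_pi, Fintype.card_fin]
    simp only [Fintype.card_fin]
    omega
  obtain ⟨e⟩ := Function.Embedding.nonempty_of_card_le hBc
  let w l := (finSuccEquiv' a l).elim 0 (extend e Subtype.val 0)
  have hwa : w a = 0 := by simp [w]
  refine ⟨w, fun c => ?_⟩
  rw [hwa]
  by_cases hc : c ∈ B
  · rcases Finset.mem_insert.1 hc with rfl | hc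
    · exact .inl ⟨a, hwa⟩
    · obtain ⟨z, -, rfl⟩ := Finset.mem_image.1 hc
      exact .inr ⟨z.1, z.2, rfl⟩
  · refine .inl ⟨(finSuccEquiv' a).symm (some (e ⟨c, Finset.mem_compl.2 hc⟩)), ?_⟩
    simp [w, e.injective.extend_apply]

variable {K : Type*} [Field K]

theorem span_pointsWithTangentAt_basis_eq_top {J : Type*} (w : J → ∀ i, Fin (m i + 1)) (a : J)
    (hw : ∀ c, (∃ l, w l = c) ∨ ∃ i r, update (w a) i r = c) :
    Submodule.span K
      (Set.range (pointsWithTangentAt (m := m) (fun l i => Pi.single (w l i) (1 : K)) a))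
      = ⊤ := by
  rw [eq_top_iff, ← (Pi.basisFun K _).span_eq, Submodule.span_le]
  rintro _ ⟨c, rfl⟩
  rw [Pi.basisFun_apply]
  apply Submodule.subset_span
  rcases hw c with ⟨l, rfl⟩ | ⟨i, r, rfl⟩
  · exact ⟨.inl l, tensorCoords_single _⟩
  · refine ⟨.inr ⟨i, r⟩, ?_⟩
    have hupd : update (fun j => (Pi.single (w a j) 1 : Fin (m j + 1) → K)) i (Pi.single r 1)
        = fun j => Pi.single (update (w a) i r j) 1 :=
      funext fun j =>
        (apply_update (fun j (r : Fin (m j + 1)) => Pi.single r (1 : K)) (w a) i r j).symm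
    simp only [pointsWithTangentAt, hupd]
    exact tensorCoords_single _

theorem exists_forall_span_pointsWithTangentAt_eq_top [Infinite K] {N : ℕ}
    (h : ∏ i, (m i + 1) ≤ N + 1 + ∑ i, m i) :
    ∃ y : Fin (N + 1) → ∀ i, Fin (m i + 1) → K, (∀ l i, y l i ≠ 0) ∧
      ∀ a, Submodule.span K (Set.range (pointsWithTangentAt y a)) = ⊤ := by
  let Y : Fin (N + 1) → ∀ i, Fin (m i + 1) → MvPolynomial (Fin (N + 1) × Σ i, Fin (m i + 1)) K :=
    fun l i r => .X (l, ⟨i, r⟩)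
  have hY (v) (a) : pointsWithTangentAt (fun l i r => v (l, ⟨i, r⟩)) a
      = fun x => MvPolynomial.eval v ∘ pointsWithTangentAt Y a x :=
    funext fun x => by simp [map_comp_pointsWithTangentAt, Y]
  have hD (a) : ∃ D ≠ 0, ∀ v, MvPolynomial.eval v D ≠ 0 →
      Submodule.span K
        (Set.range fun x => MvPolynomial.eval v ∘ pointsWithTangentAt Y a x) = ⊤ := by
    obtain ⟨w, hw⟩ := exists_forall_eq_or_update_eq_of_card_le a h
    refine exists_ne_zero_forall_eval_ne_zero_span_eq_top _
      (fun s => Pi.single (M := fun _ => K) (w s.1 s.2.1) 1 s.2.2) ?_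
    rw [← hY]
    exact span_pointsWithTangentAt_basis_eq_top w a hw
  choose D hD0 hD using hD
  obtain ⟨v, hv⟩ := exists_forall_eval_ne_zero (Sum.elim D MvPolynomial.X)
    (by rintro (a | s); exacts [hD0 a, MvPolynomial.X_ne_zero s])
  refine ⟨fun l i r => v (l, ⟨i, r⟩), fun l i h0 => hv (.inr (l, ⟨i, 0⟩)) ?_, fun a => ?_⟩
  · simpa using congrFun h0 0
  · rw [hY]
    exact hD a v (hv (.inl a))

end TensorCoords

section TensorSpace

variable {K : Type*} {k : ℕ} {n : Fin k → ℕ} (L : Fin k)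

def joinPoint (u : Fin (n L + 1) → K) (y : ∀ i : {i // i ≠ L}, Fin (n i + 1) → K) :
    ∀ i, Fin (n i + 1) → K :=
  (Equiv.piSplitAt L fun i => Fin (n i + 1) → K).symm (u, y)

@[simp]
theorem joinPoint_self (u : Fin (n L + 1) → K) (y : ∀ i : {i // i ≠ L}, Fin (n i + 1) → K) :
    joinPoint L u y L = u := by
  simp [joinPoint]

theorem joinPoint_comp_val (u : Fin (n L + 1) → K) (y : ∀ i : {i // i ≠ L}, Fin (n i + 1) → K) :
    (fun i : {i // i ≠ L} => joinPoint L u y i) = y :=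
  congrArg Prod.snd ((Equiv.piSplitAt L fun i => Fin (n i + 1) → K).apply_symm_apply (u, y))

theorem joinPoint_ne_zero [Zero K] {u : Fin (n L + 1) → K}
    {y : ∀ i : {i // i ≠ L}, Fin (n i + 1) → K} (hu : u ≠ 0) (hy : ∀ i, y i ≠ 0) (i : Fin k) :
    joinPoint L u y i ≠ 0 := by
  rcases eq_or_ne i L with rfl | hi
  · simpa using hu
  · simpa [joinPoint, hi] using hy ⟨i, hi⟩

variable [Field K]

variable (n) in
abbrev RestIndex := ∀ i : {i : Fin k // i ≠ L}, Fin (n i + 1)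

def restCoords (x : ∀ i, Fin (n i + 1) → K) : RestIndex n L → K :=
  tensorCoords fun i : {i // i ≠ L} => x i

theorem restCoords_update_self (x : ∀ i, Fin (n i + 1) → K) (u : Fin (n L + 1) → K) :
    restCoords L (update x L u) = restCoords L x := by
  simp only [restCoords]
  congr 1
  funext i
  exact update_of_ne i.2 _ _

theorem restCoords_joinPoint (u : Fin (n L + 1) → K) (y : ∀ i : {i // i ≠ L}, Fin (n i + 1) → K) :
    restCoords L (joinPoint L u y) = tensorCoords y := by
  rw [restCoords, joinPoint_comp_val]

theorem restCoords_update_joinPoint (u : Fin (n L + 1) → K)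
    (y : ∀ i : {i // i ≠ L}, Fin (n i + 1) → K) (i : {i // i ≠ L}) (z : Fin (n i + 1) → K) :
    restCoords L (update (joinPoint L u y) i z) = tensorCoords (update y i z) := by
  rw [restCoords, update_comp_eq_of_injective' _ Subtype.val_injective, joinPoint_comp_val]

variable (K n)

noncomputable def splitCoords :
    (⨂[K] i, (Fin (n i + 1) → K)) ≃ₗ[K] (Fin (n L + 1) → RestIndex n L → K) :=
  (Basis.piTensorProduct fun i => Pi.basisFun K (Fin (n i + 1))).equivFun ≪≫ₗ
    LinearEquiv.funCongrLeft K K (Equiv.piSplitAt L fun i => Fin (n i + 1)).symm ≪≫ₗ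
      LinearEquiv.curry K K _ _

theorem splitCoords_tprod (x : ∀ i, Fin (n i + 1) → K) :
    splitCoords K n L (tprod K x) = fun a => x L a • restCoords L x := by
  ext a c
  rw [splitCoords, LinearEquiv.trans_apply, LinearEquiv.trans_apply, LinearEquiv.coe_curry,
    LinearEquiv.funCongrLeft_apply]
  simp only [curry_apply, LinearMap.funLeft_apply, Module.Basis.equivFun_apply,
    Basis.piTensorProduct_repr_tprod_apply, Pi.smul_apply, smul_eq_mul, restCoords,
    tensorCoords]
  rw [Fintype.prod_eq_mul_prod_subtype_ne _ L]
  congr 1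
  · simp
  · exact Finset.prod_congr rfl fun i _ => by simp [i.2]

def slice (S : Submodule K (⨂[K] i, (Fin (n i + 1) → K))) (a : Fin (n L + 1)) :
    Set (RestIndex n L → K) :=
  restCoords L '' {x | x L = Pi.single a 1 ∧ tprod K x ∈ S}

theorem eq_top_of_forall_span_slice_eq_top (S : Submodule K (⨂[K] i, (Fin (n i + 1) → K)))
    (hS : ∀ a, Submodule.span K (slice K n L S a) = ⊤) : S = ⊤ := by
  have mem (a : Fin (n L + 1)) (w : RestIndex n L → K) :
      (splitCoords K n L).symm (Pi.single a w) ∈ S := by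
    have : Submodule.span K (slice K n L S a) ≤
        S.comap ((splitCoords K n L).symm.toLinearMap ∘ₗ LinearMap.single K _ a) := by
      rw [Submodule.span_le]
      rintro _ ⟨x, ⟨hxL, hx⟩, rfl⟩
      have hsingle : (splitCoords K n L).symm (Pi.single a (restCoords L x)) = tprod K x := by
        rw [LinearEquiv.symm_apply_eq, splitCoords_tprod, hxL]
        ext b c
        simp [Pi.single_apply, apply_ite (fun f : RestIndex n L → K => f c)]
      show (splitCoords K n L).symm (Pi.single a (restCoords L x)) ∈ S
      rwa [hsingle]
    exact this (hS a ▸ Submodule.mem_top)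
  rw [eq_top_iff]
  rintro t -
  rw [← (splitCoords K n L).symm_apply_apply t, ← Finset.univ_sum_single (splitCoords K n L t),
    map_sum]
  exact Submodule.sum_mem _ fun a _ => mem a _

variable {K n}

theorem tprod_update_mem_iSup_segreTangent {J : Type*} (p : J → ∀ i, Fin (n i + 1) → K) (l : J)
    (i : Fin k) (z : Fin (n i + 1) → K) :
    tprod K (update (p l) i z) ∈ ⨆ l, segreTangent K n (p l) :=
  Submodule.mem_iSup_of_mem l (Submodule.mem_iSup_of_mem i ⟨z, rfl⟩)

theorem restCoords_mem_slice_iSup_segreTangent {J : Type*} (p : J → ∀ i, Fin (n i + 1) → K)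
    (l : J) (a : Fin (n L + 1)) :
    restCoords L (p l) ∈ slice K n L (⨆ l, segreTangent K n (p l)) a :=
  ⟨update (p l) L (Pi.single a 1),
    ⟨update_self .., tprod_update_mem_iSup_segreTangent p l L _⟩, restCoords_update_self L _ _⟩

theorem restCoords_update_mem_slice_iSup_segreTangent {J : Type*}
    (p : J → ∀ i, Fin (n i + 1) → K) {l : J} {a : Fin (n L + 1)} (hl : p l L = Pi.single a 1)
    {i : Fin k} (hi : i ≠ L) (z : Fin (n i + 1) → K) :
    restCoords L (update (p l) i z) ∈ slice K n L (⨆ l, segreTangent K n (p l)) a :=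
  ⟨update (p l) i z, ⟨by rwa [update_of_ne hi.symm], tprod_update_mem_iSup_segreTangent p l i z⟩,
    rfl⟩

end TensorSpace

section TypicalRank

variable {K : Type*} [Field K] {k : ℕ} {n : Fin k → ℕ} (L : Fin k)

theorem iSup_segreTangent_ne_top {s : ℕ} (p : Fin s → ∀ i, Fin (n i + 1) → K)
    (hL : s < n L + 1) (hP : s < Fintype.card (RestIndex n L)) :
    ⨆ l, segreTangent K n (p l) ≠ ⊤ := by
  obtain ⟨φ, hφ, hφp⟩ := exists_ne_zero_forall_dotProduct_eq_zero (fun l => p l L)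
    (by simpa using hL)
  obtain ⟨ψ, hψ, hψp⟩ := exists_ne_zero_forall_dotProduct_eq_zero (fun l => restCoords L (p l))
    (by simpa using hP)
  let Θ : (Fin (n L + 1) → RestIndex n L → K) →ₗ[K] K :=
    { toFun F := ∑ a, φ a * (ψ ⬝ᵥ F a)
      map_add' F G := by simp [dotProduct_add, mul_add, Finset.sum_add_distrib]
      map_smul' c F := by simp [dotProduct_smul, Finset.mul_sum, mul_left_comm] }
  have hΘ (u : Fin (n L + 1) → K) (r : RestIndex n L → K) :
      Θ (fun a => u a • r) = (φ ⬝ᵥ u) * (ψ ⬝ᵥ r) := by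
    simp only [Θ, LinearMap.coe_mk, AddHom.coe_mk, dotProduct_smul, smul_eq_mul]
    rw [show φ ⬝ᵥ u = ∑ a, φ a * u a from rfl, Finset.sum_mul]
    exact Finset.sum_congr rfl fun a _ => by ring
  intro htop
  have hker :
      ⨆ l, segreTangent K n (p l) ≤ LinearMap.ker (Θ ∘ₗ (splitCoords K n L).toLinearMap) := by
    refine iSup_le fun l => iSup_le fun i => ?_
    rintro _ ⟨z, rfl⟩
    rw [LinearMap.mem_ker, LinearMap.comp_apply, MultilinearMap.toLinearMap_apply,
      LinearEquiv.coe_coe, splitCoords_tprod, hΘ]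
    rcases eq_or_ne i L with rfl | hi
    · rw [restCoords_update_self, hψp, mul_zero]
    · rw [update_of_ne hi.symm, hφp, zero_mul]
  rw [htop, top_le_iff, LinearMap.ker_eq_top] at hker
  obtain ⟨a, ha⟩ : ∃ a, φ a ≠ 0 := Function.ne_iff.1 hφ
  obtain ⟨c, hc⟩ : ∃ c, ψ c ≠ 0 := Function.ne_iff.1 hψ
  have := LinearMap.congr_fun hker <| (splitCoords K n L).symm
    fun b => (Pi.single a 1 : Fin (n L + 1) → K) b • (Pi.single c 1 : RestIndex n L → K)
  rw [LinearMap.comp_apply, LinearEquiv.coe_coe, LinearEquiv.apply_symm_apply, hΘ,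
    dotProduct_single_one, dotProduct_single_one] at this
  exact mul_ne_zero ha hc this

theorem exists_iSup_segreTangent_eq_top_card_restIndex :
    ∃ p : Fin (Fintype.card (RestIndex n L)) → ∀ i, Fin (n i + 1) → K,
      (∀ l i, p l i ≠ 0) ∧ ⨆ l, segreTangent K n (p l) = ⊤ := by
  let e := Fintype.equivFin (RestIndex n L)
  let p l := joinPoint L (Pi.single 0 1) fun i => Pi.single (e.symm l i) (1 : K)
  refine ⟨p, fun l => joinPoint_ne_zero L (by simp) (by simp),
    eq_top_of_forall_span_slice_eq_top K n L _ fun a => ?_⟩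
  rw [eq_top_iff, ← (Pi.basisFun K _).span_eq, Submodule.span_le]
  rintro _ ⟨c, rfl⟩
  refine Submodule.subset_span ?_
  convert restCoords_mem_slice_iSup_segreTangent L p (e c) a
  rw [Pi.basisFun_apply, restCoords_joinPoint, e.symm_apply_apply, tensorCoords_single]

theorem exists_iSup_segreTangent_eq_top_of_card_le [Infinite K]
    (h : Fintype.card (RestIndex n L) ≤ n L + 1 + ∑ i : {i // i ≠ L}, n i) :
    ∃ p : Fin (n L + 1) → ∀ i, Fin (n i + 1) → K,
      (∀ l i, p l i ≠ 0) ∧ ⨆ l, segreTangent K n (p l) = ⊤ := by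
  obtain ⟨y, hy0, hy⟩ := exists_forall_span_pointsWithTangentAt_eq_top (K := K)
    (m := fun i : {i // i ≠ L} => n i) (N := n L) (by simpa using h)
  let p l := joinPoint L (Pi.single l 1) (y l)
  refine ⟨p, fun l => joinPoint_ne_zero L (by simp) (hy0 l),
    eq_top_of_forall_span_slice_eq_top K n L _ fun a => ?_⟩
  rw [eq_top_iff, ← hy a]
  refine Submodule.span_mono ?_
  rintro _ ⟨l | ⟨i, r⟩, rfl⟩
  · convert restCoords_mem_slice_iSup_segreTangent L p l a
    exact (restCoords_joinPoint L _ _).symm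
  · convert restCoords_update_mem_slice_iSup_segreTangent L p (joinPoint_self L _ _) i.2
      (Pi.single r 1)
    exact (restCoords_update_joinPoint L _ _ i _).symm

end TypicalRank

/-- Let `1 ≤ n₁ ≤ ⋯ ≤ n_k` be unbalanced, i.e.
`Π_{i<k-1}(nᵢ+1) + 1 ≤ n_k + Σ_{i<k-1} nᵢ`.  Then the typical tensor rank — the least
`s` for which there exist `s` points `p₁,…,p_s` (pure tensors of nonzero vectors) whose
tangent spaces span the whole tensor space — equals
`min (n_k + 1) (Π_{i<k-1}(nᵢ+1))`. -/
theorem unbalanced_typical_rank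
    (K : Type*) [Field K] [CharZero K] {k : ℕ} (hk : 3 ≤ k)
    (n : Fin k → ℕ)
    (hunbal : ∏ i ∈ Finset.univ.filter (fun i : Fin k => (i : ℕ) + 1 < k), (n i + 1) + 1
        ≤ n ⟨k - 1, by omega⟩
          + ∑ i ∈ Finset.univ.filter (fun i : Fin k => (i : ℕ) + 1 < k), n i) :
    IsLeast {s : ℕ | ∃ p : Fin s → ∀ i, Fin (n i + 1) → K,
        (∀ j i, p j i ≠ 0) ∧
        (⨆ j, segreTangent K n (p j)) = (⊤ : Submodule K (⨂[K] i, (Fin (n i + 1) → K)))}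
      (min (n ⟨k - 1, by omega⟩ + 1)
        (∏ i ∈ Finset.univ.filter (fun i : Fin k => (i : ℕ) + 1 < k), (n i + 1))) := by
  set L : Fin k := ⟨k - 1, by omega⟩
  have hfilter (i : Fin k) :
      i ∈ Finset.univ.filter (fun i : Fin k => (i : ℕ) + 1 < k) ↔ i ≠ L := by
    simp [L, Fin.ext_iff]
    omega
  have hcard : ∏ i ∈ Finset.univ.filter (fun i : Fin k => (i : ℕ) + 1 < k), (n i + 1)
      = Fintype.card (RestIndex n L) := by
    simp only [Fintype.card_pi, Fintype.card_fin]
    exact Finset.prod_subtype _ hfilter (fun i => n i + 1)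
  rw [hcard, Finset.sum_subtype _ hfilter n] at hunbal
  rw [hcard]
  refine ⟨?_, fun s ⟨p, _, hp⟩ => not_lt.1 fun hs =>
    iSup_segreTangent_ne_top L p (lt_min_iff.1 hs).1 (lt_min_iff.1 hs).2 hp⟩
  rcases le_total (n L + 1) (Fintype.card (RestIndex n L)) with h | h
  · rw [min_eq_left h]
    exact exists_iSup_segreTangent_eq_top_of_card_le L (by omega)
  · rw [min_eq_right h]
    exact exists_iSup_segreTangent_eq_top_card_restIndex L
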